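/- arXiv:1205.1864 — 4 statements merged into one kernel-verified Lean document; each statement's English description precedes it below -/
import Mathlib

section
/- Let A be an invertible m×m real matrix, D an invertible symmetric n×n real matrix, and B an m×n real matrix. Set A_full = fromBlocks A B Bᵀ D, S = A - B * D⁻¹ * Bᵀ, G = fromBlocks I 0 (-D⁻¹ * Bᵀ) I, and let M = G * (fromBlocks A⁻¹ 0 0 D⁻¹) * Gᵀ be the one-level hierarchical Schur complement preconditioner (the exact Schur inverse S⁻¹ replaced by A⁻¹). Then M * A_full = G * (fromBlocks (A⁻¹ * S) 0 0 I) * G⁻¹; in particular M * A_full is similar to the block diagonal matrix fromBlocks (A⁻¹ * S) 0 0 I. -/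
open Matrix

/-!
Write `G = fromBlocks 1 0 (-(D⁻¹ * Bᵀ)) 1`. Because `D` is symmetric,
`Gᵀ = fromBlocks 1 (-(B * D⁻¹)) 0 1` is the block row operation eliminating `B` from `A_full`,
and the block LDU factorization gives `Gᵀ * A_full = fromBlocks S 0 0 D * G⁻¹`. Hence
`M * A_full = G * (fromBlocks A⁻¹ 0 0 D⁻¹ * fromBlocks S 0 0 D) * G⁻¹`, and the middle factor
is `fromBlocks (A⁻¹ * S) 0 0 1`.
-/

namespace Matrix

variable {l m n α : Type*} [DecidableEq m] [Fintype n] [DecidableEq n] [CommRing α]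

theorem transpose_fromBlocks_one_zero_neg_inv_mul_one {D : Matrix n n α}
    (hD : D.IsSymm) (B : Matrix m n α) :
    (fromBlocks (1 : Matrix m m α) 0 (-(D⁻¹ * Bᵀ)) (1 : Matrix n n α))ᵀ =
      fromBlocks 1 (-(B * D⁻¹)) 0 1 := by
  simp [fromBlocks_transpose, transpose_nonsing_inv, hD.eq]

variable [Fintype m]

theorem inv_fromBlocks_one_zero_one (C : Matrix n m α) :
    (fromBlocks (1 : Matrix m m α) 0 C (1 : Matrix n n α))⁻¹ = fromBlocks 1 0 (-C) 1 := by
  simpa using inv_fromBlocks_zero₁₂_of_isUnit_iff (1 : Matrix m m α) C 1 (by simp)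

theorem fromBlocks_one_neg_zero_one_mul_fromBlocks [Fintype l] [DecidableEq l]
    (A : Matrix l m α) (B : Matrix l n α) (C : Matrix n m α) {D : Matrix n n α}
    (hD : IsUnit D.det) :
    fromBlocks (1 : Matrix l l α) (-(B * D⁻¹)) 0 (1 : Matrix n n α) * fromBlocks A B C D =
      fromBlocks (A - B * D⁻¹ * C) 0 0 D *
        (fromBlocks (1 : Matrix m m α) 0 (-(D⁻¹ * C)) (1 : Matrix n n α))⁻¹ := by
  let := invertibleOfIsUnitDet D hD
  have hcancel : fromBlocks (1 : Matrix l l α) (-(B * D⁻¹)) 0 (1 : Matrix n n α) *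
      fromBlocks 1 (B * D⁻¹) 0 1 = 1 := by
    simp [fromBlocks_multiply, ← fromBlocks_one]
  rw [fromBlocks_eq_of_invertible₂₂ A B C D, invOf_eq_nonsing_inv, inv_fromBlocks_one_zero_one,
    neg_neg, ← Matrix.mul_assoc, ← Matrix.mul_assoc, hcancel, Matrix.one_mul]

end Matrix

theorem preconditioned_matrix_similar_blockDiagonal_general {m n : Type*} [Fintype m] [Fintype n]
    [DecidableEq m] [DecidableEq n]
    (A : Matrix m m ℝ) (B : Matrix m n ℝ) (D : Matrix n n ℝ)
    (hD : IsUnit D.det) (hDsymm : D.IsSymm) :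
    (fromBlocks (1 : Matrix m m ℝ) (0 : Matrix m n ℝ) (-(D⁻¹ * Bᵀ)) (1 : Matrix n n ℝ) *
          fromBlocks A⁻¹ (0 : Matrix m n ℝ) (0 : Matrix n m ℝ) D⁻¹ *
          (fromBlocks (1 : Matrix m m ℝ) (0 : Matrix m n ℝ) (-(D⁻¹ * Bᵀ))
            (1 : Matrix n n ℝ))ᵀ) *
        fromBlocks A B Bᵀ D =
      fromBlocks (1 : Matrix m m ℝ) (0 : Matrix m n ℝ) (-(D⁻¹ * Bᵀ)) (1 : Matrix n n ℝ) *
        fromBlocks (A⁻¹ * (A - B * D⁻¹ * Bᵀ)) (0 : Matrix m n ℝ) (0 : Matrix n m ℝ)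
          (1 : Matrix n n ℝ) *
        (fromBlocks (1 : Matrix m m ℝ) (0 : Matrix m n ℝ) (-(D⁻¹ * Bᵀ))
          (1 : Matrix n n ℝ))⁻¹ := by
  set G := fromBlocks (1 : Matrix m m ℝ) 0 (-(D⁻¹ * Bᵀ)) (1 : Matrix n n ℝ)
  have hdiag : fromBlocks A⁻¹ 0 0 D⁻¹ * fromBlocks (A - B * D⁻¹ * Bᵀ) 0 0 D =
      fromBlocks (A⁻¹ * (A - B * D⁻¹ * Bᵀ)) (0 : Matrix m n ℝ) 0 1 := by
    simp [fromBlocks_multiply, nonsing_inv_mul D hD]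
  calc G * fromBlocks A⁻¹ 0 0 D⁻¹ * Gᵀ * fromBlocks A B Bᵀ D
      = G * fromBlocks A⁻¹ 0 0 D⁻¹ * (Gᵀ * fromBlocks A B Bᵀ D) := by
        simp only [Matrix.mul_assoc]
    _ = G * fromBlocks A⁻¹ 0 0 D⁻¹ * (fromBlocks (A - B * D⁻¹ * Bᵀ) 0 0 D * G⁻¹) := by
        rw [transpose_fromBlocks_one_zero_neg_inv_mul_one hDsymm,
          fromBlocks_one_neg_zero_one_mul_fromBlocks _ _ _ hD]
    _ = G * fromBlocks (A⁻¹ * (A - B * D⁻¹ * Bᵀ)) 0 0 1 * G⁻¹ := by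
        rw [← hdiag]; simp only [Matrix.mul_assoc]

/-- One-level hierarchical Schur complement preconditioner: with `A` invertible, `D`
invertible symmetric, `A_full = fromBlocks A B Bᵀ D`, `S = A - B * D⁻¹ * Bᵀ`,
`G = fromBlocks 1 0 (-D⁻¹*Bᵀ) 1` and `M = G * fromBlocks A⁻¹ 0 0 D⁻¹ * Gᵀ`, one has
`M * A_full = G * fromBlocks (A⁻¹ * S) 0 0 1 * G⁻¹`, i.e. `M * A_full` is similar to the
block diagonal matrix `fromBlocks (A⁻¹ * S) 0 0 1`. -/
theorem preconditioned_matrix_similar_blockDiagonal {m n : Type*} [Fintype m] [Fintype n]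
    [DecidableEq m] [DecidableEq n]
    (A : Matrix m m ℝ) (B : Matrix m n ℝ) (D : Matrix n n ℝ)
    (hA : IsUnit A.det) (hD : IsUnit D.det) (hDsymm : D.IsSymm) :
    (fromBlocks (1 : Matrix m m ℝ) (0 : Matrix m n ℝ) (-(D⁻¹ * Bᵀ)) (1 : Matrix n n ℝ) *
          fromBlocks A⁻¹ (0 : Matrix m n ℝ) (0 : Matrix n m ℝ) D⁻¹ *
          (fromBlocks (1 : Matrix m m ℝ) (0 : Matrix m n ℝ) (-(D⁻¹ * Bᵀ))
            (1 : Matrix n n ℝ))ᵀ) *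
        fromBlocks A B Bᵀ D =
      fromBlocks (1 : Matrix m m ℝ) (0 : Matrix m n ℝ) (-(D⁻¹ * Bᵀ)) (1 : Matrix n n ℝ) *
        fromBlocks (A⁻¹ * (A - B * D⁻¹ * Bᵀ)) (0 : Matrix m n ℝ) (0 : Matrix n m ℝ)
          (1 : Matrix n n ℝ) *
        (fromBlocks (1 : Matrix m m ℝ) (0 : Matrix m n ℝ) (-(D⁻¹ * Bᵀ))
          (1 : Matrix n n ℝ))⁻¹ :=
  preconditioned_matrix_similar_blockDiagonal_general A B D hD hDsymm
end

section
/- Let A be an invertible m×m real matrix, D an invertible symmetric n×n real matrix with n ≥ 1, and B an m×n real matrix. Set A_full = fromBlocks A B Bᵀ D, S = A - B * D⁻¹ * Bᵀ, and let M = (fromBlocks I 0 (-D⁻¹ * Bᵀ) I) * (fromBlocks A⁻¹ 0 0 D⁻¹) * (fromBlocks I (-B * D⁻¹) 0 I). Then the spectrum of M * A_full equals the spectrum of A⁻¹ * S together with the value 1, i.e., spectrum(M * A_full) = spectrum(A⁻¹ * S) ∪ {1}. -/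
open Matrix

/-! Left multiplication by the elimination factor `fromBlocks 1 (-(B * D⁻¹)) 0 1` clears the
upper-right block of `A_full` and leaves the Schur complement `S` in the upper-left one; the
remaining factors keep the product block lower triangular, with diagonal blocks `A⁻¹ * S` and `1`.
The characteristic polynomial of a block triangular matrix is the product of those of its diagonal
blocks, so the spectrum is `spectrum (A⁻¹ * S) ∪ spectrum 1`, and `spectrum 1 = {1}` as `n ≥ 1`. -/

theorem Matrix.spectrum_fromBlocks_zero₁₂ {K : Type*} [Field K] {m n : Type*} [Fintype m]
    [Fintype n] [DecidableEq m] [DecidableEq n] (A : Matrix m m K) (C : Matrix n m K)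
    (D : Matrix n n K) : spectrum K (fromBlocks A 0 C D) = spectrum K A ∪ spectrum K D := by
  ext μ
  simp only [Set.mem_union, mem_spectrum_iff_isRoot_charpoly, charpoly_fromBlocks_zero₁₂,
    Polynomial.IsRoot.def, Polynomial.eval_mul, mul_eq_zero]

theorem Matrix.schurPreconditioner_mul_fromBlocks {R : Type*} [CommRing R] {m n : Type*}
    [Fintype m] [Fintype n] [DecidableEq m] [DecidableEq n]
    (A : Matrix m m R) (B : Matrix m n R) (C : Matrix n m R) (D : Matrix n n R)
    (hD : IsUnit D.det) :
    (fromBlocks 1 0 (-(D⁻¹ * C)) 1 * fromBlocks A⁻¹ 0 0 D⁻¹ * fromBlocks 1 (-(B * D⁻¹)) 0 1) *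
        fromBlocks A B C D =
      fromBlocks (A⁻¹ * (A - B * D⁻¹ * C)) 0
        (D⁻¹ * C - D⁻¹ * C * (A⁻¹ * (A - B * D⁻¹ * C))) 1 := by
  simp only [fromBlocks_multiply, Matrix.mul_sub, Matrix.add_mul, Matrix.mul_one,
    Matrix.one_mul, Matrix.mul_zero, Matrix.zero_mul, Matrix.neg_mul, Matrix.mul_neg, add_zero,
    zero_add, Matrix.mul_assoc, Matrix.nonsing_inv_mul _ hD]
  rw [fromBlocks_inj]
  exact ⟨by abel, by abel, by abel, by abel⟩

theorem spectrum_preconditioned_matrix_general {m n : ℕ} (hn : 1 ≤ n)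
    (A : Matrix (Fin m) (Fin m) ℝ) (B : Matrix (Fin m) (Fin n) ℝ)
    (D : Matrix (Fin n) (Fin n) ℝ)
    (hD : IsUnit D.det) :
    spectrum ℝ
        ((fromBlocks (1 : Matrix (Fin m) (Fin m) ℝ) (0 : Matrix (Fin m) (Fin n) ℝ)
              (-(D⁻¹ * Bᵀ)) (1 : Matrix (Fin n) (Fin n) ℝ) *
            fromBlocks A⁻¹ (0 : Matrix (Fin m) (Fin n) ℝ) (0 : Matrix (Fin n) (Fin m) ℝ) D⁻¹ *
            fromBlocks (1 : Matrix (Fin m) (Fin m) ℝ) (-(B * D⁻¹))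
              (0 : Matrix (Fin n) (Fin m) ℝ) (1 : Matrix (Fin n) (Fin n) ℝ)) *
          fromBlocks A B Bᵀ D) =
      spectrum ℝ (A⁻¹ * (A - B * D⁻¹ * Bᵀ)) ∪ {1} := by
  have : Nonempty (Fin n) := ⟨⟨0, hn⟩⟩
  rw [schurPreconditioner_mul_fromBlocks A B Bᵀ D hD, spectrum_fromBlocks_zero₁₂,
    spectrum.one_eq]

/-- Spectrum of the one-level preconditioned matrix: with `A` invertible, `D` invertible
symmetric (`n ≥ 1`), `A_full = fromBlocks A B Bᵀ D`, `S = A - B * D⁻¹ * Bᵀ` and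
`M = fromBlocks 1 0 (-D⁻¹*Bᵀ) 1 * fromBlocks A⁻¹ 0 0 D⁻¹ * fromBlocks 1 (-B*D⁻¹) 0 1`,
the spectrum of `M * A_full` equals the spectrum of `A⁻¹ * S` together with `1`. -/
theorem spectrum_preconditioned_matrix {m n : ℕ} (hn : 1 ≤ n)
    (A : Matrix (Fin m) (Fin m) ℝ) (B : Matrix (Fin m) (Fin n) ℝ)
    (D : Matrix (Fin n) (Fin n) ℝ)
    (hA : IsUnit A.det) (hD : IsUnit D.det) (hDsymm : D.IsSymm) :
    spectrum ℝ
        ((fromBlocks (1 : Matrix (Fin m) (Fin m) ℝ) (0 : Matrix (Fin m) (Fin n) ℝ)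
              (-(D⁻¹ * Bᵀ)) (1 : Matrix (Fin n) (Fin n) ℝ) *
            fromBlocks A⁻¹ (0 : Matrix (Fin m) (Fin n) ℝ) (0 : Matrix (Fin n) (Fin m) ℝ) D⁻¹ *
            fromBlocks (1 : Matrix (Fin m) (Fin m) ℝ) (-(B * D⁻¹))
              (0 : Matrix (Fin n) (Fin m) ℝ) (1 : Matrix (Fin n) (Fin n) ℝ)) *
          fromBlocks A B Bᵀ D) =
      spectrum ℝ (A⁻¹ * (A - B * D⁻¹ * Bᵀ)) ∪ {1} :=
  spectrum_preconditioned_matrix_general hn A B D hD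
end

section
/- (Variational characterization of the Schur complement.) Let the symmetric real block matrix A_full = fromBlocks A B Bᵀ D be positive definite, with A of size m×m and D of size n×n, and let S = A - B * D⁻¹ * Bᵀ. Then for every u ∈ ℝ^m, uᵀ S u = inf over v ∈ ℝ^n of the quadratic form (u, v)ᵀ A_full (u, v), and the infimum is attained at v = -D⁻¹ * Bᵀ * u. -/
open Matrix

/-!
Completing the square in the `v`-block,
`(u, v)ᵀ A_full (u, v) = (D⁻¹ Bᵀ u + v)ᵀ D (D⁻¹ Bᵀ u + v) + uᵀ S u`.
The first summand is nonnegative because `D`, a principal block of the positive definite `A_full`,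
is itself positive definite, and it vanishes at `v = -D⁻¹ Bᵀ u`.
-/

namespace Matrix

variable {m n R : Type*}

theorem PosDef.fromBlocks₂₂_posDef [Ring R] [PartialOrder R] [StarRing R]
    {A : Matrix m m R} {B : Matrix m n R} {C : Matrix n m R} {D : Matrix n n R}
    (h : (fromBlocks A B C D).PosDef) : D.PosDef :=
  h.submatrix Sum.inr_injective

variable [Fintype m] [Fintype n] [DecidableEq n]

section TrivialStar

variable [CommRing R] [StarRing R] [TrivialStar R]
  (A : Matrix m m R) (B : Matrix m n R) {D : Matrix n n R} [Invertible D]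

theorem dotProduct_fromBlocks_mulVec_eq_schur (hD : D.IsSymm) (u : m → R) (v : n → R) :
    Sum.elim u v ⬝ᵥ (fromBlocks A B Bᵀ D *ᵥ Sum.elim u v) =
      ((D⁻¹ * Bᵀ) *ᵥ u + v) ⬝ᵥ (D *ᵥ ((D⁻¹ * Bᵀ) *ᵥ u + v)) +
        u ⬝ᵥ ((A - B * D⁻¹ * Bᵀ) *ᵥ u) := by
  simpa only [conjTranspose_eq_transpose_of_trivial, star_trivial, dotProduct_mulVec] using
    schur_complement_eq₂₂ A B u v (isHermitian_iff_isSymm.2 hD)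

theorem dotProduct_fromBlocks_mulVec_neg_schur_eq (hD : D.IsSymm) (u : m → R) :
    Sum.elim u (-((D⁻¹ * Bᵀ) *ᵥ u)) ⬝ᵥ
        (fromBlocks A B Bᵀ D *ᵥ Sum.elim u (-((D⁻¹ * Bᵀ) *ᵥ u))) =
      u ⬝ᵥ ((A - B * D⁻¹ * Bᵀ) *ᵥ u) := by
  simp [dotProduct_fromBlocks_mulVec_eq_schur A B hD]

end TrivialStar

theorem isLeast_dotProduct_fromBlocks_mulVec (A : Matrix m m ℝ) (B : Matrix m n ℝ)
    {D : Matrix n n ℝ} (hD : D.PosDef) (u : m → ℝ) :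
    IsLeast (Set.range fun v ↦ Sum.elim u v ⬝ᵥ (fromBlocks A B Bᵀ D *ᵥ Sum.elim u v))
      (u ⬝ᵥ ((A - B * D⁻¹ * Bᵀ) *ᵥ u)) := by
  have := hD.isUnit.invertible
  have hDsymm : D.IsSymm := isHermitian_iff_isSymm.1 hD.isHermitian
  refine ⟨⟨_, dotProduct_fromBlocks_mulVec_neg_schur_eq A B hDsymm u⟩,
    Set.forall_mem_range.2 fun v ↦ ?_⟩
  rw [dotProduct_fromBlocks_mulVec_eq_schur A B hDsymm]
  exact le_add_of_nonneg_left (hD.posSemidef.dotProduct_mulVec_nonneg _)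

end Matrix

theorem schur_variational_characterization_general {m n : Type*} [Fintype m] [Fintype n]
    [DecidableEq n]
    (A : Matrix m m ℝ) (B : Matrix m n ℝ) (D : Matrix n n ℝ)
    (hpd : (fromBlocks A B Bᵀ D).PosDef) :
    ∀ u : m → ℝ,
      (u ⬝ᵥ ((A - B * D⁻¹ * Bᵀ) *ᵥ u) =
        ⨅ v : n → ℝ, Sum.elim u v ⬝ᵥ (fromBlocks A B Bᵀ D *ᵥ Sum.elim u v)) ∧
      Sum.elim u (-((D⁻¹ * Bᵀ) *ᵥ u)) ⬝ᵥ
          (fromBlocks A B Bᵀ D *ᵥ Sum.elim u (-((D⁻¹ * Bᵀ) *ᵥ u))) =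
        u ⬝ᵥ ((A - B * D⁻¹ * Bᵀ) *ᵥ u) := by
  intro u
  have hD := hpd.fromBlocks₂₂_posDef
  have := hD.isUnit.invertible
  exact ⟨(isLeast_dotProduct_fromBlocks_mulVec A B hD u).isGLB.ciInf_eq.symm,
    dotProduct_fromBlocks_mulVec_neg_schur_eq A B (isHermitian_iff_isSymm.1 hD.isHermitian) u⟩

/-- Variational characterization of the Schur complement: if `fromBlocks A B Bᵀ D` is
positive definite (symmetric), then for every `u`,
`uᵀ S u = ⨅ v, (u, v)ᵀ (fromBlocks A B Bᵀ D) (u, v)` where `S = A - B * D⁻¹ * Bᵀ`,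
and the infimum is attained at `v = -(D⁻¹ * Bᵀ) *ᵥ u`. -/
theorem schur_variational_characterization {m n : Type*} [Fintype m] [Fintype n]
    [DecidableEq m] [DecidableEq n]
    (A : Matrix m m ℝ) (B : Matrix m n ℝ) (D : Matrix n n ℝ)
    (hAsymm : A.IsSymm) (hDsymm : D.IsSymm)
    (hpd : (fromBlocks A B Bᵀ D).PosDef) :
    ∀ u : m → ℝ,
      (u ⬝ᵥ ((A - B * D⁻¹ * Bᵀ) *ᵥ u) =
        ⨅ v : n → ℝ, Sum.elim u v ⬝ᵥ (fromBlocks A B Bᵀ D *ᵥ Sum.elim u v)) ∧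
      Sum.elim u (-((D⁻¹ * Bᵀ) *ᵥ u)) ⬝ᵥ
          (fromBlocks A B Bᵀ D *ᵥ Sum.elim u (-((D⁻¹ * Bᵀ) *ᵥ u))) =
        u ⬝ᵥ ((A - B * D⁻¹ * Bᵀ) *ᵥ u) :=
  schur_variational_characterization_general A B D hpd
end

section
/- (Lemma 3.1: the trailing diagonal block of the stochastic Galerkin matrix is diagonal.) Fix N ≥ 1 and for a multi-index α : Fin N → ℕ let ψ_α(x) = ∏_{d=0}^{N-1} P_{α(d)}(x_d) denote the product of Legendre polynomials, a function on the cube [-1,1]^N. Let α ≠ β be two multi-indices with equal total degree, ∑_d α(d) = ∑_d β(d). Then the integral over [-1,1]^N (with respect to Lebesgue measure) of ψ_α(x) * ψ_β(x) is zero, and for every coordinate i ∈ Fin N the integral over [-1,1]^N of x_i * ψ_α(x) * ψ_β(x) is also zero. -/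
/-!
Rodrigues' formula and `n` integrations by parts (the boundary terms vanish because `±1` are
roots of order `n` of `(x² - 1)ⁿ`) show that `Pₙ` is orthogonal on `[-1, 1]` to every polynomial
of degree `< n`, in particular to `Pₘ` for `m ≠ n`. On the cube the integrands are products of
one-variable functions, so by Fubini the integrals factor into one-dimensional ones. Since `α ≠ β`,
some coordinate `d` has `α d ≠ β d`, which kills the first integral. For the moment `x_i ψ_α ψ_β`,
equal total degree forbids `α` and `β` from differing only at `i`, so such a `d` can be chosen
different from `i`, where the factor `x_i` does not enter.
-/

open Polynomial MeasureTheory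

/-- The `n`-th Legendre polynomial, defined by Rodrigues' formula
`P_n(x) = (1 / (2^n n!)) (d/dx)^n [(x² - 1)^n]`. -/
noncomputable def legendre (n : ℕ) : Polynomial ℝ :=
  (1 / (2 ^ n * (n.factorial : ℝ))) • (derivative^[n] ((X ^ 2 - 1) ^ n))

namespace Polynomial

theorem isRoot_iterate_derivative_of_pow_dvd {R : Type*} [CommRing R] {p : R[X]} {t : R}
    {n j : ℕ} (h : (X - C t) ^ n ∣ p) (hj : j < n) : (derivative^[j] p).IsRoot t :=
  dvd_iff_isRoot.mp <| (dvd_pow_self _ (Nat.sub_ne_zero_of_lt hj)).trans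
    (pow_sub_dvd_iterate_derivative_of_pow_dvd j h)

theorem isRoot_iterate_derivative_X_sq_sub_one_pow {R : Type*} [CommRing R] {n j : ℕ}
    (hj : j < n) {t : R} (ht : t = 1 ∨ t = -1) :
    (derivative^[j] (((X : R[X]) ^ 2 - 1) ^ n)).IsRoot t := by
  have hfactor : (X : R[X]) ^ 2 - 1 = (X - C 1) * (X - C (-1)) := by
    simp only [map_neg, map_one]
    ring
  refine isRoot_iterate_derivative_of_pow_dvd ?_ hj
  rw [hfactor, mul_pow]
  rcases ht with rfl | rfl
  · exact dvd_mul_right _ _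
  · exact dvd_mul_left _ _

theorem intervalIntegral_eval_derivative_mul (p q : ℝ[X]) (a b : ℝ) :
    ∫ t in a..b, (derivative p).eval t * q.eval t = p.eval b * q.eval b - p.eval a * q.eval a -
      ∫ t in a..b, p.eval t * (derivative q).eval t := by
  simpa only [mul_comm (q.eval _), mul_comm (eval _ (derivative q))] using
    intervalIntegral.integral_mul_deriv_eq_deriv_mul (a := a) (b := b)
      (fun x _ => q.hasDerivAt x) (fun x _ => p.hasDerivAt x)
      ((Polynomial.continuous _).intervalIntegrable _ _)
      ((Polynomial.continuous _).intervalIntegrable _ _)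

theorem intervalIntegral_eval_iterate_derivative_mul {p : ℝ[X]} {a b : ℝ} {k : ℕ}
    (hp : ∀ j < k, (derivative^[j] p).IsRoot a ∧ (derivative^[j] p).IsRoot b) (q : ℝ[X]) :
    ∫ t in a..b, (derivative^[k] p).eval t * q.eval t =
      (-1) ^ k * ∫ t in a..b, p.eval t * (derivative^[k] q).eval t := by
  induction k generalizing q with
  | zero => simp
  | succ k ih =>
    obtain ⟨ha, hb⟩ := hp k k.lt_succ_self
    rw [Function.iterate_succ_apply', intervalIntegral_eval_derivative_mul, ha.eq_zero,
      hb.eq_zero, ih (fun j hj => hp j (hj.trans k.lt_succ_self)), Function.iterate_succ_apply]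
    ring

end Polynomial

theorem natDegree_legendre_le (n : ℕ) : (legendre n).natDegree ≤ n := by
  have hsq : ((X : ℝ[X]) ^ 2 - 1).natDegree = 2 := natDegree_X_pow_sub_C (r := (1 : ℝ))
  calc (legendre n).natDegree
      ≤ (derivative^[n] (((X : ℝ[X]) ^ 2 - 1) ^ n)).natDegree := natDegree_smul_le _ _
    _ ≤ (((X : ℝ[X]) ^ 2 - 1) ^ n).natDegree - n := natDegree_iterate_derivative _ _
    _ ≤ 2 * n - n := by gcongr; exact natDegree_pow_le.trans_eq (by rw [hsq, mul_comm])
    _ = n := by omega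

theorem intervalIntegral_legendre_mul_eq_zero {n : ℕ} {q : ℝ[X]} (hq : q.natDegree < n) :
    ∫ t in (-1 : ℝ)..1, (legendre n).eval t * q.eval t = 0 := by
  simp only [legendre, eval_smul, smul_eq_mul, mul_assoc]
  rw [intervalIntegral.integral_const_mul, intervalIntegral_eval_iterate_derivative_mul
    (fun j hj => ⟨isRoot_iterate_derivative_X_sq_sub_one_pow hj (.inr rfl),
      isRoot_iterate_derivative_X_sq_sub_one_pow hj (.inl rfl)⟩),
    iterate_derivative_eq_zero hq]
  simp

theorem setIntegral_legendre_mul_legendre_of_ne {m n : ℕ} (h : m ≠ n) :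
    ∫ t in Set.Icc (-1 : ℝ) 1, (legendre m).eval t * (legendre n).eval t = 0 := by
  rw [integral_Icc_eq_integral_Ioc, ← intervalIntegral.integral_of_le (by norm_num)]
  rcases h.lt_or_gt with h | h
  · simp_rw [mul_comm ((legendre m).eval _)]
    exact intervalIntegral_legendre_mul_eq_zero ((natDegree_legendre_le m).trans_lt h)
  · exact intervalIntegral_legendre_mul_eq_zero ((natDegree_legendre_le n).trans_lt h)

namespace MeasureTheory

theorem setIntegral_univ_pi_prod {ι 𝕜 E : Type*} [Fintype ι] [RCLike 𝕜]
    [MeasureSpace E] [SigmaFinite (volume : Measure E)]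
    (s : ι → Set E) (f : ι → E → 𝕜) :
    ∫ x in Set.univ.pi s, ∏ i, f i (x i) = ∏ i, ∫ t in s i, f i t := by
  rw [volume_pi, Measure.restrict_pi_pi, integral_fintype_prod_eq_prod]

end MeasureTheory

theorem Function.exists_ne_and_apply_ne_of_sum_eq {ι M : Type*} [Fintype ι]
    [AddCancelCommMonoid M] {f g : ι → M} (hne : f ≠ g) (hsum : ∑ d, f d = ∑ d, g d) (i : ι) :
    ∃ d, d ≠ i ∧ f d ≠ g d := by
  classical
  by_contra! hcon
  refine hne (funext fun d => ?_)
  rcases eq_or_ne d i with rfl | hd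
  · have hrest : ∑ e ∈ Finset.univ.erase d, f e = ∑ e ∈ Finset.univ.erase d, g e :=
      Finset.sum_congr rfl fun e he => hcon e (Finset.ne_of_mem_erase he)
    rw [← Finset.add_sum_erase _ _ (Finset.mem_univ d), ← Finset.add_sum_erase _ g
      (Finset.mem_univ d), hrest] at hsum
    exact add_right_cancel hsum
  · exact hcon d hd

theorem tensor_legendre_equal_degree_orthogonal_general (N : ℕ)
    (α β : Fin N → ℕ) (hne : α ≠ β) (hdeg : ∑ d, α d = ∑ d, β d) :
    (∫ x in Set.univ.pi (fun _ : Fin N => Set.Icc (-1 : ℝ) 1),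
        (∏ d, (legendre (α d)).eval (x d)) * ∏ d, (legendre (β d)).eval (x d)) = 0 ∧
    ∀ i : Fin N,
      (∫ x in Set.univ.pi (fun _ : Fin N => Set.Icc (-1 : ℝ) 1),
        x i * (∏ d, (legendre (α d)).eval (x d)) * ∏ d, (legendre (β d)).eval (x d)) = 0 := by
  let ψ : Fin N → ℝ → ℝ := fun d t => (legendre (α d)).eval t * (legendre (β d)).eval t
  refine ⟨?_, fun i => ?_⟩
  · obtain ⟨d, hd⟩ := Function.ne_iff.mp hne
    simp_rw [← Finset.prod_mul_distrib]
    rw [setIntegral_univ_pi_prod _ ψ]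
    exact Finset.prod_eq_zero (Finset.mem_univ d) (setIntegral_legendre_mul_legendre_of_ne hd)
  · obtain ⟨d, hdi, hd⟩ := Function.exists_ne_and_apply_ne_of_sum_eq hne hdeg i
    have hprod (x : Fin N → ℝ) :
        x i * (∏ d, (legendre (α d)).eval (x d)) * ∏ d, (legendre (β d)).eval (x d) =
          ∏ e, (if e = i then x e else 1) * ψ e (x e) := by
      rw [Finset.prod_mul_distrib, Finset.prod_ite_eq' Finset.univ i, if_pos (Finset.mem_univ i),
        mul_assoc, ← Finset.prod_mul_distrib]
    simp_rw [hprod]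
    rw [setIntegral_univ_pi_prod _ fun e t => (if e = i then t else 1) * ψ e t]
    refine Finset.prod_eq_zero (Finset.mem_univ d) ?_
    simpa only [if_neg hdi, one_mul] using setIntegral_legendre_mul_legendre_of_ne hd

/-- Lemma 3.1: for multi-indices `α ≠ β` of equal total degree, the product Legendre
polynomials `ψ_α(x) = ∏ d, P_{α d}(x_d)` and `ψ_β` are orthogonal over the cube
`[-1,1]^N` (w.r.t. Lebesgue measure), and moreover the first moments
`∫ x_i ψ_α ψ_β` vanish for every coordinate `i`. -/
theorem tensor_legendre_equal_degree_orthogonal (N : ℕ) (hN : 1 ≤ N)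
    (α β : Fin N → ℕ) (hne : α ≠ β) (hdeg : ∑ d, α d = ∑ d, β d) :
    (∫ x in Set.univ.pi (fun _ : Fin N => Set.Icc (-1 : ℝ) 1),
        (∏ d, (legendre (α d)).eval (x d)) * ∏ d, (legendre (β d)).eval (x d)) = 0 ∧
    ∀ i : Fin N,
      (∫ x in Set.univ.pi (fun _ : Fin N => Set.Icc (-1 : ℝ) 1),
        x i * (∏ d, (legendre (α d)).eval (x d)) * ∏ d, (legendre (β d)).eval (x d)) = 0 :=
  tensor_legendre_equal_degree_orthogonal_general N α β hne hdeg
end
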